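/- In the construction of Lemma 'issys': suppose ⟨M_ξ : ξ ≤ ζ⟩ is a sequence of countable elementary substructures of (H(χ), ∈, ≤_χ) such that each γ_ξ is the ξ-th ordinal of M_ξ (counting from 0), each M_{ξ+1} is a minimal (2^{2^{λ_{γ_ξ}}}, λ_{γ_ξ+1})-extension of M_ξ, and M_ξ = ⋃_{η<ξ} M_η at limits ξ. Then for each ξ ≤ ζ, the sequence ⟨γ_η : η ≤ ξ⟩ lists the first ξ+1 ordinals of M_ξ in increasing order. -/

import Mathlib

open ZFSet FirstOrder

namespace P746

/-! ## First-order language with membership and a wellordering predicate -/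

/-- The language with two binary relation symbols: `∈` and a wellordering `<*`. -/
def L : FirstOrder.Language where
  Functions := fun _ => Empty
  Relations := fun n => match n with
    | 2 => Fin 2
    | _ => Empty

/-- The `L`-structure on (the members of) a ZF-set `M`, interpreting the first relation
as membership and the second as a given relation `r`. -/
def mStruc (M : ZFSet) (r : ZFSet → ZFSet → Prop) : L.Structure M.toSet where
  funMap := fun f _ => f.elim
  RelMap := fun {n} => match n with
    | 0 => fun R _ => R.elim
    | 1 => fun R _ => R.elim
    | 2 => fun R v => if (show Fin 2 from R) = (0 : Fin 2) then ((v 0 : ZFSet) ∈ (v 1 : ZFSet)) else r (v 0) (v 1)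
    | (_+3) => fun R _ => R.elim

/-- `X` is an elementary substructure of `(M, ∈, r)`: `X ⊆ M` and every first-order formula
with parameters from `X` holds in `X` iff it holds in `M`. -/
def ElemSub (M : ZFSet) (r : ZFSet → ZFSet → Prop) (X : ZFSet) : Prop :=
  ∃ h : X ⊆ M,
    ∀ (n : ℕ) (φ : L.Formula (Fin n)) (v : Fin n → X.toSet),
      (letI := mStruc M r
       φ.Realize (fun i => (⟨(v i : ZFSet), h (v i).2⟩ : M.toSet))) ↔
      (letI := mStruc X r; φ.Realize v)

/-- `r` is a wellordering of the members of `S`. -/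
def WOn (S : ZFSet) (r : ZFSet → ZFSet → Prop) : Prop :=
  IsWellOrder S.toSet (Subrel r S.toSet)

/-! ## Basic set-theoretic notions inside `ZFSet` -/

/-- `x` is a (von Neumann) ordinal: a transitive set of transitive sets. -/
def IsOrd (x : ZFSet) : Prop :=
  x.IsTransitive ∧ ∀ y ∈ x.toSet, ZFSet.IsTransitive y

/-- `w` is the first uncountable ordinal `ω₁`. -/
def IsOmega1 (w : ZFSet) : Prop :=
  IsOrd w ∧ ¬ w.toSet.Countable ∧ ∀ y ∈ w.toSet, y.toSet.Countable

/-- The set `[x]^{<ω}` of finite subsets of `x`. -/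
noncomputable def finPow (x : ZFSet) : ZFSet :=
  ZFSet.sep (fun a => a.toSet.Finite) x.powerset

/-- The set `[x]^n` of subsets of `x` of size `n`. -/
noncomputable def finPowCard (x : ZFSet) (n : ℕ) : ZFSet :=
  ZFSet.sep (fun a => a.toSet.Finite ∧ a.toSet.ncard = n) x.powerset

/-- `D^X_η`: the set of finite `a ⊆ η` such that `f(a) ∈ X` for every
`f : [η]^{|a|} → ω₁` belonging to `X` (`w` stands for `ω₁`). -/
def Dset (w X η : ZFSet) : Set ZFSet :=
  {a | a ∈ finPow η ∧ ∀ f ∈ X.toSet, ZFSet.IsFunc (finPowCard η a.toSet.ncard) w f →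
    ∀ v : ZFSet, ZFSet.pair a v ∈ f → v ∈ X}

/-- The Skolem hull of `X ∪ z` in `M` (with functions on `[η]^{<ω}`):
`X` together with all values `f(a)` for `f : [η]^{<ω} → M` in `X` and finite `a ⊆ z`. -/
def SkHull (M η X z : ZFSet) : Set ZFSet :=
  X.toSet ∪ {y | ∃ f ∈ X.toSet, ZFSet.IsFunc (finPow η) M f ∧
    ∃ a : ZFSet, a ∈ finPow η ∧ a ⊆ z ∧ ZFSet.pair a y ∈ f}

/-- `x` is hereditarily of cardinality less than `κ`. -/
def HerLt (κ : Cardinal) (x : ZFSet) : Prop :=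
  ZFSet.mem_wf.fix (C := fun _ => Prop)
    (fun y ih => Cardinal.mk y.toSet < κ ∧ ∀ z, ∀ h : z ∈ y, ih z h) x

/-- `H` is the collection `H(κ)` of sets hereditarily of cardinality `< κ`. -/
def IsHCard (κ : Cardinal) (H : ZFSet) : Prop :=
  ∀ x : ZFSet, x ∈ H ↔ HerLt κ x

/-! ## Clubs, stationarity and canonical functions on `ω₁` -/

noncomputable def omega1 : Ordinal.{0} := (Cardinal.aleph 1).ord
noncomputable def omega2 : Ordinal.{0} := (Cardinal.aleph 2).ord

/-- `C` is a club (closed unbounded) subset of `ω₁`. -/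
def IsClub (C : Set Ordinal.{0}) : Prop :=
  C ⊆ Set.Iio omega1 ∧
  (∀ o, o < omega1 → Order.IsSuccLimit o → (∀ b, b < o → ∃ c ∈ C, b ≤ c ∧ c < o) → o ∈ C) ∧
  (∀ b, b < omega1 → ∃ c ∈ C, b < c ∧ c < omega1)

/-- `S` is a stationary subset of `ω₁`. -/
def IsStat (S : Set Ordinal.{0}) : Prop :=
  ∀ C, IsClub C → (S ∩ C).Nonempty

/-- `f ≤ g` on a club. -/
def BddOnClub (f g : Ordinal.{0} → Ordinal.{0}) : Prop :=
  ∃ C, IsClub C ∧ ∀ α ∈ C, f α ≤ g α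

/-- `f < g` on a club. -/
def LtOnClub (f g : Ordinal.{0} → Ordinal.{0}) : Prop :=
  ∃ C, IsClub C ∧ ∀ α ∈ C, f α < g α

/-- `f` is a canonical function for `γ`: it is above every canonical function for every `β < γ`
(mod clubs), and minimally so.  (This is the standard recursive characterization of the
statement that the empty condition in `P(ω₁)/NS_{ω₁}` forces `j(f)(ω₁^V) = γ`.) -/
def Canonical : Ordinal.{0} → (Ordinal.{0} → Ordinal.{0}) → Prop :=
  Ordinal.lt_wf.fix (C := fun _ => (Ordinal.{0} → Ordinal.{0}) → Prop)
    (fun γ ih f =>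
      (∀ β, ∀ hβ : β < γ, ∀ g, ih β hβ g → LtOnClub g f) ∧
      ∀ h : Ordinal.{0} → Ordinal.{0},
        (∀ β, ∀ hβ : β < γ, ∀ g, ih β hβ g → LtOnClub g h) → BddOnClub f h)

/-- Every `f : ω₁ → ω₁` is bounded on a club by a canonical function for some `γ < ω₂`. -/
def Bounding : Prop :=
  ∀ f : Ordinal.{0} → Ordinal.{0}, (∀ α, α < omega1 → f α < omega1) →
    ∃ γ, γ < omega2 ∧ ∃ g, Canonical γ g ∧ BddOnClub f g

/-- `o` is the order type of the set of ordinals `s`: there is a strictly increasing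
enumeration of `s` indexed by the ordinals below `o`. -/
def IsOtypOf (o : Ordinal.{0}) (s : Set Ordinal.{0}) : Prop :=
  ∃ e : Ordinal.{0} → Ordinal.{0},
    (∀ i j, i < j → j < o → e i < e j) ∧
    (∀ i, i < o → e i ∈ s) ∧ ∀ x ∈ s, ∃ i, i < o ∧ e i = x

/-! ## Trees on `ω × ω` and `ω × Ord` (as sets of pairs of lists) -/

def IsTreeN (S : Set (List ℕ × List ℕ)) : Prop :=
  ∀ p ∈ S, p.1.length = p.2.length ∧ ∀ n : ℕ, (p.1.take n, p.2.take n) ∈ S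

def IsTreeO (T : Set (List ℕ × List Ordinal.{0})) : Prop :=
  ∀ p ∈ T, p.1.length = p.2.length ∧ ∀ n : ℕ, (p.1.take n, p.2.take n) ∈ T

/-- Projection of a tree on `ω × ω`. -/
def projN (S : Set (List ℕ × List ℕ)) : Set (ℕ → ℕ) :=
  {x | ∃ y : ℕ → ℕ, ∀ n : ℕ,
    (List.ofFn (fun i : Fin n => x i), List.ofFn (fun i : Fin n => y i)) ∈ S}

/-- Projection of a tree on `ω × Ord`. -/
def projO (T : Set (List ℕ × List Ordinal.{0})) : Set (ℕ → ℕ) :=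
  {x | ∃ y : ℕ → Ordinal.{0}, ∀ n : ℕ,
    (List.ofFn (fun i : Fin n => x i), List.ofFn (fun i : Fin n => y i)) ∈ T}

/-- Projection of the restricted tree `T ↾ (ω × α)`. -/
def projOBelow (T : Set (List ℕ × List Ordinal.{0})) (α : Ordinal.{0}) : Set (ℕ → ℕ) :=
  {x | ∃ y : ℕ → Ordinal.{0}, (∀ i, y i < α) ∧ ∀ n : ℕ,
    (List.ofFn (fun i : Fin n => x i), List.ofFn (fun i : Fin n => y i)) ∈ T}

/-! ## Names, evaluation, and generic extensions -/

open Classical in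
/-- Evaluation of a `P`-name `τ` by a filter `G`:
`val G τ = { val G σ : ∃ p ∈ G, (σ, p) ∈ τ }`, by recursion on rank. -/
noncomputable def val (G : ZFSet) : ZFSet → ZFSet :=
  WellFounded.fix (InvImage.wf ZFSet.rank Ordinal.lt_wf)
    (fun τ ih =>
      ZFSet.sUnion <| ZFSet.sep
        (fun y => ∃ z ∈ τ.toSet,
          if h : ∃ σ, ZFSet.rank σ < ZFSet.rank τ ∧ ∃ p ∈ G.toSet, z = ZFSet.pair σ p
          then y = {ih h.choose h.choose_spec.1}
          else y = ∅)
        (ZFSet.powerset (ZFSet.sUnion (ZFSet.sUnion (ZFSet.sUnion τ)))))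

/-- The universe is a generic extension `V[G]` of the transitive class `V` by the
partial order `(P, ≤)` (with `le` the set of pairs `(p,q)` with `p ≤ q`), `G ⊆ P`
a filter meeting every dense subset of `P` lying in `V`, and every set being the
value of a `P`-name in `V`. -/
def IsGenericExt (V : Set ZFSet) (P le G : ZFSet) : Prop :=
  (∀ x ∈ V, ∀ y, y ∈ x → y ∈ V) ∧ P ∈ V ∧ le ∈ V ∧
  (∀ p, p ∈ P → ZFSet.pair p p ∈ le) ∧
  (∀ p q z, ZFSet.pair p q ∈ le → ZFSet.pair q z ∈ le → ZFSet.pair p z ∈ le) ∧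
  (∀ p q, ZFSet.pair p q ∈ le → p ∈ P ∧ q ∈ P) ∧
  G ⊆ P ∧ G ≠ ∅ ∧
  (∀ p q, p ∈ G → q ∈ G → ∃ r, r ∈ G ∧ ZFSet.pair r p ∈ le ∧ ZFSet.pair r q ∈ le) ∧
  (∀ p q, p ∈ G → q ∈ P → ZFSet.pair p q ∈ le → q ∈ G) ∧
  (∀ D, D ∈ V → D ⊆ P → (∀ p, p ∈ P → ∃ q, q ∈ D ∧ ZFSet.pair q p ∈ le) →
    ∃ q, q ∈ G ∧ q ∈ D) ∧
  (∀ x : ZFSet, ∃ τ, τ ∈ V ∧ x = val G τ)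

/-- In the generic extension, the forcing added no new `ω`-sequences of ordinals;
i.e. `P` is `(ω, ∞)`-distributive. -/
def Distributive (V : Set ZFSet) : Prop :=
  ∀ f o : ZFSet, (o.IsTransitive ∧ ∀ y ∈ o.toSet, ZFSet.IsTransitive y) →
    ZFSet.IsFunc ZFSet.omega o f → f ∈ V

/-! ## Ultrafilters and completeness -/

/-- `U` is an ultrafilter on the set `S`. -/
def IsUltraOn (S U : ZFSet) : Prop :=
  U ⊆ S.powerset ∧ S ∈ U ∧ (∅ : ZFSet) ∉ U ∧
  (∀ A B, A ∈ U → A ⊆ B → B ⊆ S → B ∈ U) ∧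
  (∀ A B, A ∈ U → B ∈ U → A ∩ B ∈ U) ∧
  (∀ A, A ⊆ S → (A ∈ U ∨ ZFSet.sep (fun x => x ∉ A) S ∈ U))

/-- `U` is `γ`-complete with respect to families of members of `U` lying in `W`. -/
def CompleteOn (W : Set ZFSet) (γ : Cardinal.{1}) (S U : ZFSet) : Prop :=
  ∀ F, F ∈ W → F ≠ ∅ → F ⊆ U → Cardinal.mk F.toSet < γ →
    ZFSet.sep (fun x => ∀ A ∈ F.toSet, x ∈ A) S ∈ U

/-! ## Internal finite sequences, trees and homogeneity -/

/-- The set `κ^{<ω}` of finite sequences from `κ` (functions `n → κ`, `n < ω`). -/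
noncomputable def seqs (κ : ZFSet) : ZFSet :=
  ZFSet.sep (fun f => ∃ n, n ∈ ZFSet.omega ∧ ZFSet.IsFunc n κ f)
    (((κ ∪ ZFSet.omega).powerset.powerset).powerset)

/-- The set of functions `a → b` as a ZF-set. -/
noncomputable def funsZ (a b : ZFSet) : ZFSet :=
  ZFSet.sep (fun f => ZFSet.IsFunc a b f) (((a ∪ b).powerset.powerset).powerset)

/-- Restriction of a (set-)function `f` to `m`. -/
noncomputable def restr (f m : ZFSet) : ZFSet :=
  ZFSet.sep (fun p => ∃ i v, i ∈ m ∧ p = ZFSet.pair i v) f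

/-- `T` is a tree on `ω × κ`: a set of pairs of finite sequences of equal length,
closed under restriction. -/
def IsTreeZ (κ T : ZFSet) : Prop :=
  ∀ z, z ∈ T → ∃ n s t, n ∈ ZFSet.omega ∧ ZFSet.IsFunc n ZFSet.omega s ∧
    ZFSet.IsFunc n κ t ∧ z = ZFSet.pair s t ∧
    ∀ m, m ∈ n → ZFSet.pair (restr s m) (restr t m) ∈ T

/-- `x ∈ p[T]`, computed in `W`: there is a branch witness `y ∈ W`. -/
def inProjZ (W : Set ZFSet) (κ T x : ZFSet) : Prop :=
  ∃ y, y ∈ W ∧ ZFSet.IsFunc ZFSet.omega κ y ∧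
    ∀ n, n ∈ ZFSet.omega → ZFSet.pair (restr x n) (restr y n) ∈ T

/-- `x ∈ p[T ↾ (ω × A)]` where the branch takes values satisfying `Q`. -/
def inProjVal (κ T x : ZFSet) (Q : ZFSet → Prop) : Prop :=
  ∃ y, ZFSet.IsFunc ZFSet.omega κ y ∧ (∀ i v, ZFSet.pair i v ∈ y → Q v) ∧
    ∀ n, n ∈ ZFSet.omega → ZFSet.pair (restr x n) (restr y n) ∈ T

/-- The tower `⟨π(x ↾ k) : k < ω⟩` is countably complete, relativized to `W`. -/
def CCTower (W : Set ZFSet) (κ π x : ZFSet) : Prop :=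
  ∀ Af, Af ∈ W → ZFSet.IsFunc ZFSet.omega ((seqs κ).powerset) Af →
    (∀ n U a, n ∈ ZFSet.omega → ZFSet.pair (restr x n) U ∈ π →
      ZFSet.pair n a ∈ Af → a ∈ U) →
    ∃ y, y ∈ W ∧ ZFSet.IsFunc ZFSet.omega κ y ∧
      ∀ n a, n ∈ ZFSet.omega → ZFSet.pair n a ∈ Af → restr y n ∈ a

/-- `(T, π)` is a `γ`-homogeneous tree system on `ω × κ`, relativized to the class `W`. -/
def HomSys (W : Set ZFSet) (γ : Cardinal.{1}) (κ T π : ZFSet) : Prop :=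
  IsTreeZ κ T ∧
  (∀ z, z ∈ π → ∃ n s U, n ∈ ZFSet.omega ∧ ZFSet.IsFunc n ZFSet.omega s ∧
    z = ZFSet.pair s U ∧ IsUltraOn (funsZ n κ) U ∧ CompleteOn W γ (funsZ n κ) U ∧
    ZFSet.sep (fun t => ZFSet.pair s t ∈ T) (funsZ n κ) ∈ U) ∧
  (∀ s U U', ZFSet.pair s U ∈ π → ZFSet.pair s U' ∈ π → U = U') ∧
  (∀ x, x ∈ W → ZFSet.IsFunc ZFSet.omega ZFSet.omega x →
    (inProjZ W κ T x ↔
      ((∀ n, n ∈ ZFSet.omega → ∃ U, ZFSet.pair (restr x n) U ∈ π) ∧ CCTower W κ π x)))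

/-- `A` is a `γ`-homogeneously Suslin set of reals, in the sense of the class `W`. -/
def HomSuslinIn (W : Set ZFSet) (γ : Cardinal.{1}) (A : ZFSet) : Prop :=
  A ⊆ funsZ ZFSet.omega ZFSet.omega ∧
  ∃ κ T π, κ ∈ W ∧ T ∈ W ∧ π ∈ W ∧
    (κ.IsTransitive ∧ ∀ y ∈ κ.toSet, ZFSet.IsTransitive y) ∧
    HomSys W γ κ T π ∧
    ∀ x, ZFSet.IsFunc ZFSet.omega ZFSet.omega x → (x ∈ A ↔ inProjZ W κ T x)


/-! ## Additional notions -/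

/-- `γ` is a regular (limit) cardinal, as a ZF-set ordinal: the range of any function
from a smaller ordinal into `γ` is bounded. -/
def IsRegOrd (γ : ZFSet) : Prop :=
  IsOrd γ ∧ (∀ o ∈ γ.toSet, ∃ o' ∈ γ.toSet, o ∈ o') ∧
  ∀ b f, b ∈ γ → ZFSet.IsFunc b γ f → ∃ o ∈ γ.toSet, ∀ x v, ZFSet.pair x v ∈ f → v ∈ o

/-- `Y` is a minimal `(η, λ)`-extension of `X` (inside the model `M` with wellordering `r`):
`Y ≺ M`, `Y ∩ η = X ∩ η`, and `Y` is the Skolem hull of `X ∪ A` for some `A ⊆ λ`. -/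
def IsMinExt (M : ZFSet) (r : ZFSet → ZFSet → Prop) (η lam X Y : ZFSet) : Prop :=
  ElemSub M r Y ∧ Y ∩ η = X ∩ η ∧ ∃ A : ZFSet, A ⊆ lam ∧ Y.toSet = SkHull M lam X A

/-- `U` is a normal measure on the (measurable) cardinal `λ`. -/
def IsNormalMeasure (lam U : ZFSet) : Prop :=
  IsOrd lam ∧ IsUltraOn lam U ∧
  CompleteOn Set.univ (Cardinal.mk lam.toSet) lam U ∧
  (∀ x, x ∈ lam → ({x} : ZFSet) ∉ U) ∧
  ∀ f A, A ∈ U → ZFSet.IsFunc lam lam f →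
    (∀ x v, x ∈ A → ZFSet.pair x v ∈ f → (v ∈ x ∨ x = ∅)) →
    ∃ B c, B ∈ U ∧ ∀ x, x ∈ B → ZFSet.pair x c ∈ f

/-- `g` is the `ξ`-th ordinal of `M` (counting from `0`): the ordinals of `M` below `g`
have order type `ξ`. -/
def NthOrdOf (M : ZFSet) (ξ : Ordinal.{0}) (g : ZFSet) : Prop :=
  IsOrd g ∧ g ∈ M ∧
  IsOtypOf ξ (ZFSet.rank '' {x : ZFSet | x ∈ M.toSet ∧ IsOrd x ∧ x ∈ g})

/-- The relation `≤_o` on a tree `T` on `ω × ω₁`: one sequence extends the other, and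
the first coordinate of the last element of the longer one codes that the length of the
first is below the length of the second in the coded ordering.  (`decode k m n` means:
the value `k` codes `m` before `n`.) -/
def leO (T : Set (List ℕ × List Ordinal.{0})) (decode : ℕ → ℕ → ℕ → Prop)
    (p q : List ℕ × List Ordinal.{0}) : Prop :=
  p ∈ T ∧ q ∈ T ∧
  ((p.1 <+: q.1 ∧ p.2 <+: q.2 ∧ p.1.length < q.1.length ∧
      decode (q.1.getD (q.1.length - 1) 0) p.1.length q.1.length) ∨
   (q.1 <+: p.1 ∧ q.2 <+: p.2 ∧ q.1.length < p.1.length ∧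
      decode (p.1.getD (p.1.length - 1) 0) p.1.length q.1.length))

/-- The binary relation on `ω` coded by `x : ω → ω`:  comparisons of `n` with smaller
numbers are decided by `x (n - 1)`. -/
def codedRel (decode : ℕ → ℕ → ℕ → Prop) (x : ℕ → ℕ) (m n : ℕ) : Prop :=
  (m < n ∧ decode (x (n - 1)) m n) ∨ (n < m ∧ decode (x (m - 1)) m n)


/-
The models form a continuous ⊆-chain, and by induction on `ξ` every ordinal of `M ξ` below `γ η`
(`η ≤ ξ`) already lies in `M η`; then the ordinals of `M ξ` and of `M η` below `γ η` coincide, so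
`γ η` is still the `η`-th ordinal of `M ξ`. At a successor `σ + 1` we have
`γ η ⊆ γ σ ⊆ λ_{γ σ} ∈ η_σ` by Cantor, since `|η_σ| = 2^{2^{|λ_{γ σ}|}}`, and
`M (σ + 1) ∩ η_σ = M σ ∩ η_σ`. At a limit, an ordinal of `M ξ` already lies in some earlier `M η'`.
-/

lemma IsOrd.isOrdinal {x : ZFSet} (hx : IsOrd x) : x.IsOrdinal :=
  isOrdinal_iff_forall_mem_isTransitive.2 hx

lemma IsOtypOf.le_of_strictMonoOn {o₁ o₂ : Ordinal} {s : Set Ordinal} {e : Ordinal → Ordinal}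
    (h : IsOtypOf o₂ s) (he : StrictMonoOn e (Set.Iio o₁)) (hmaps : Set.MapsTo e (Set.Iio o₁) s) :
    o₁ ≤ o₂ := by
  obtain ⟨e₂, he₂, -, hsurj⟩ := h
  have he₂' : StrictMonoOn e₂ (Set.Iio o₂) := fun i _ j hj hij => he₂ i j hij hj
  by_contra! hlt
  -- otherwise `e₂⁻¹ ∘ e` is a strictly monotone self-map of `Iio o₁` moving `o₂` below itself
  choose f hf hef using fun i : Set.Iio o₁ => hsurj _ (hmaps i.2)
  let g : Set.Iio o₁ → Set.Iio o₁ := fun i => ⟨f i, (hf i).trans hlt⟩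
  have hg : StrictMono g := fun i j hij => by
    change f i < f j
    rw [← he₂'.lt_iff_lt (hf i) (hf j), hef, hef]
    exact he i.2 j.2 hij
  exact (hf ⟨o₂, hlt⟩).not_ge (hg.le_apply (x := ⟨o₂, hlt⟩))

lemma NthOrdOf.subset_of_le {N g G : ZFSet} {η ξ : Ordinal} (hg : NthOrdOf N η g)
    (hG : NthOrdOf N ξ G) (hle : η ≤ ξ) : g ⊆ G := by
  obtain ⟨hgo, -, hgtyp⟩ := hg
  obtain ⟨hGo, hGN, e, he, hemem, -⟩ := hG
  by_contra hsub
  have hGg : G ∈ g := (hgo.isOrdinal.not_subset_iff_mem hGo.isOrdinal).1 hsub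
  have hrank : ∀ i < ξ, e i < G.rank := fun i hi => by
    obtain ⟨x, ⟨-, -, hxG⟩, hx⟩ := hemem i hi
    exact hx ▸ rank_lt_of_mem hxG
  -- the enumeration of the ordinals of `N` below `G`, followed by `G` itself
  let e' : Ordinal → Ordinal := fun i => if i < ξ then e i else G.rank
  have key : Order.succ ξ ≤ η := by
    refine hgtyp.le_of_strictMonoOn (e := e') (fun i hi j hj hij => ?_) (fun i hi => ?_)
    · have hi' : i < ξ := hij.trans_le (Order.lt_succ_iff.1 hj)
      by_cases hj' : j < ξ
      · simpa [e', hi', hj'] using he i j hij hj'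
      · simpa [e', hi', hj'] using hrank i hi'
    · by_cases hi' : i < ξ
      · obtain ⟨x, ⟨hxN, hxo, hxG⟩, hx⟩ := hemem i hi'
        exact ⟨x, ⟨hxN, hxo, hgo.1.mem_trans hxG hGg⟩, by simp [e', hi', hx]⟩
      · exact ⟨G, ⟨hGN, hGo, hGg⟩, by simp [e', hi']⟩
  exact (Order.succ_le_iff.1 key).not_ge hle

lemma NthOrdOf.mono {N N' g : ZFSet} {η : Ordinal} (h : NthOrdOf N η g) (hsub : N ⊆ N')
    (htrace : ∀ x ∈ N', IsOrd x → x ∈ g → x ∈ N) : NthOrdOf N' η g := by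
  obtain ⟨hgo, hgN, htyp⟩ := h
  refine ⟨hgo, hsub hgN, ?_⟩
  convert htyp using 2
  ext x
  exact ⟨fun ⟨hx, hxo, hxg⟩ => ⟨htrace x hx hxo hxg, hxo, hxg⟩,
    fun ⟨hx, hxo, hxg⟩ => ⟨hsub hx, hxo, hxg⟩⟩

lemma mem_of_card_lt {x y : ZFSet} (hx : x.IsOrdinal) (hy : y.IsOrdinal)
    (h : Cardinal.mk x.toSet < Cardinal.mk y.toSet) : x ∈ y := by
  by_contra hxy
  exact h.not_ge (Cardinal.mk_le_mk_of_subset ((hx.notMem_iff_subset hy).1 hxy))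

lemma subset_apply_rank {lam : Ordinal → ZFSet} (hlam : ∀ ρ, (lam ρ).IsOrdinal)
    (hinc : ∀ ρ ρ', ρ < ρ' → lam ρ ∈ lam ρ') {x : ZFSet} (hx : x.IsOrdinal) :
    x ⊆ lam x.rank := by
  have hmono : StrictMono fun ρ => (lam ρ).rank := fun _ _ h => rank_lt_of_mem (hinc _ _ h)
  exact (hx.rank_le_iff_subset (hlam _)).1 hmono.le_apply

section Chain

variable {ζ : Ordinal} {M : Ordinal → ZFSet}

lemma subset_of_le_of_continuous (hsucc : ∀ ξ < ζ, M ξ ⊆ M (ξ + 1))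
    (hlim : ∀ ξ ≤ ζ, Order.IsSuccLimit ξ → (M ξ).toSet = ⋃ η ∈ Set.Iio ξ, (M η).toSet) :
    ∀ ξ ≤ ζ, ∀ η ≤ ξ, M η ⊆ M ξ := by
  intro ξ
  induction ξ using Ordinal.limitRecOn with
  | zero => intro _ η hη; rw [nonpos_iff_eq_zero.1 hη]
  | add_one σ ih =>
    intro hσ η hη
    rcases hη.eq_or_lt with rfl | hlt
    · rfl
    have hσζ : σ < ζ := (lt_add_one σ).trans_le hσ
    exact (ih hσζ.le η (Order.lt_add_one_iff.1 hlt)).trans (hsucc σ hσζ)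
  | limit ξ hξ _ =>
    intro hξζ η hη x hx
    rcases hη.eq_or_lt with rfl | hlt
    · exact hx
    change x ∈ (M ξ).toSet
    rw [hlim ξ hξζ hξ]
    exact Set.mem_biUnion hlt hx

lemma nthOrdOf_of_continuous {γ : Ordinal → ZFSet} (hsucc : ∀ ξ < ζ, M ξ ⊆ M (ξ + 1))
    (hlim : ∀ ξ ≤ ζ, Order.IsSuccLimit ξ → (M ξ).toSet = ⋃ η ∈ Set.Iio ξ, (M η).toSet)
    (hγ : ∀ ξ ≤ ζ, NthOrdOf (M ξ) ξ (γ ξ))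
    (hstep : ∀ σ < ζ, ∀ x ∈ M (σ + 1), x ∈ γ σ → x ∈ M σ) :
    ∀ ξ ≤ ζ, ∀ η ≤ ξ, NthOrdOf (M ξ) η (γ η) := by
  have hmono := subset_of_le_of_continuous hsucc hlim
  have htrace : ∀ ξ ≤ ζ, ∀ η ≤ ξ, ∀ x ∈ M ξ, x ∈ γ η → x ∈ M η := by
    intro ξ
    induction ξ using Ordinal.limitRecOn with
    | zero => intro _ η hη; rw [nonpos_iff_eq_zero.1 hη]; exact fun _ hx _ => hx
    | add_one σ ih =>
      intro hσ η hη x hx hxγ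
      rcases hη.eq_or_lt with rfl | hlt
      · exact hx
      have hσζ : σ < ζ := (lt_add_one σ).trans_le hσ
      have hησ : η ≤ σ := Order.lt_add_one_iff.1 hlt
      have hγη : NthOrdOf (M σ) η (γ η) :=
        (hγ η (hησ.trans hσζ.le)).mono (hmono σ hσζ.le η hησ)
          fun y hy _ hyγ => ih hσζ.le η hησ y hy hyγ
      have hxσ : x ∈ M σ := hstep σ hσζ x hx (hγη.subset_of_le (hγ σ hσζ.le) hησ hxγ)
      exact ih hσζ.le η hησ x hxσ hxγ
    | limit ξ hξ ih =>
      intro hξζ η hη x hx hxγ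
      rcases hη.eq_or_lt with rfl | hlt
      · exact hx
      have hx' : x ∈ (M ξ).toSet := hx
      rw [hlim ξ hξζ hξ] at hx'
      obtain ⟨η', hη', hxη'⟩ := Set.mem_iUnion₂.1 hx'
      have hμ : max η η' < ξ := max_lt hlt hη'
      exact ih _ hμ (hμ.le.trans hξζ) η (le_max_left _ _) x
        (hmono _ (hμ.le.trans hξζ) η' (le_max_right _ _) hxη') hxγ
  intro ξ hξ η hη
  exact (hγ η (hη.trans hξ)).mono (hmono ξ hξ η hη) fun x hx _ hxγ => htrace ξ hξ η hη x hx hxγ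

end Chain

theorem stmt_17_general (Hs : ZFSet)
    (r : ZFSet → ZFSet → Prop)
    (lam : Ordinal.{0} → ZFSet)
    (hlamord : ∀ ρ, IsOrd (lam ρ) ∧ (Cardinal.mk (lam ρ).toSet).IsStrongLimit)
    (hlaminc : ∀ ρ ρ', ρ < ρ' → lam ρ ∈ lam ρ')
    (ζ : Ordinal.{0}) (M : Ordinal.{0} → ZFSet) (γ : Ordinal.{0} → ZFSet)
    (eta : Ordinal.{0} → ZFSet)
    (hγ : ∀ ξ, ξ ≤ ζ → NthOrdOf (M ξ) ξ (γ ξ))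
    (heta : ∀ ξ, ξ < ζ → IsOrd (eta ξ) ∧
      Cardinal.mk (eta ξ).toSet = (2 : Cardinal.{1}) ^ ((2 : Cardinal.{1}) ^ Cardinal.mk (lam (ZFSet.rank (γ ξ))).toSet))
    (hsucc : ∀ ξ, ξ < ζ →
      IsMinExt Hs r (eta ξ) (lam (ZFSet.rank (γ ξ) + 1)) (M ξ) (M (ξ + 1)))
    (hlim : ∀ ξ, ξ ≤ ζ → Order.IsSuccLimit ξ → (M ξ).toSet = ⋃ η ∈ Set.Iio ξ, (M η).toSet) :
    ∀ ξ, ξ ≤ ζ → ∀ η, η ≤ ξ → NthOrdOf (M ξ) η (γ η) := by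
  have hlamOrd (ρ : Ordinal) : (lam ρ).IsOrdinal := (hlamord ρ).1.isOrdinal
  refine nthOrdOf_of_continuous (fun ξ hξ x hx => ?_) hlim hγ fun σ hσ x hx hxγ => ?_
  · obtain ⟨-, -, _, -, hhull⟩ := hsucc ξ hξ
    change x ∈ (M (ξ + 1)).toSet
    exact hhull ▸ Or.inl hx
  · obtain ⟨hηo, hcard⟩ := heta σ hσ
    set c := Cardinal.mk (lam (γ σ).rank).toSet
    have hc : c < (2 : Cardinal) ^ (2 : Cardinal) ^ c :=
      (Cardinal.cantor c).trans_le (Cardinal.power_le_power_left two_ne_zero (Cardinal.cantor c).le)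
    have hlamη : lam (γ σ).rank ∈ eta σ := mem_of_card_lt (hlamOrd _) hηo.isOrdinal (hcard ▸ hc)
    have hxη : x ∈ eta σ := hηo.1.mem_trans
      (subset_apply_rank hlamOrd hlaminc (hγ σ hσ.le).1.isOrdinal hxγ) hlamη
    have hxinter : x ∈ M (σ + 1) ∩ eta σ := ZFSet.mem_inter.2 ⟨hx, hxη⟩
    rw [(hsucc σ hσ).2.1] at hxinter
    exact (ZFSet.mem_inter.1 hxinter).1

theorem stmt_17 (χ : Cardinal.{1}) (Hs : ZFSet) (hH : IsHCard χ Hs)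
    (r : ZFSet → ZFSet → Prop) (hr : WOn Hs r)
    (lam : Ordinal.{0} → ZFSet)
    (hlamord : ∀ ρ, IsOrd (lam ρ) ∧ (Cardinal.mk (lam ρ).toSet).IsStrongLimit)
    (hlaminc : ∀ ρ ρ', ρ < ρ' → lam ρ ∈ lam ρ')
    (hlamcont : ∀ ρ, Order.IsSuccLimit ρ → (lam ρ).toSet = ⋃ ρ' ∈ Set.Iio ρ, (lam ρ').toSet)
    (ζ : Ordinal.{0}) (M : Ordinal.{0} → ZFSet) (γ : Ordinal.{0} → ZFSet)
    (eta : Ordinal.{0} → ZFSet)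
    (hM : ∀ ξ, ξ ≤ ζ → ElemSub Hs r (M ξ) ∧ (M ξ).toSet.Countable)
    (hγ : ∀ ξ, ξ ≤ ζ → NthOrdOf (M ξ) ξ (γ ξ))
    (heta : ∀ ξ, ξ < ζ → IsOrd (eta ξ) ∧
      Cardinal.mk (eta ξ).toSet = (2 : Cardinal.{1}) ^ ((2 : Cardinal.{1}) ^ Cardinal.mk (lam (ZFSet.rank (γ ξ))).toSet))
    (hsucc : ∀ ξ, ξ < ζ →
      IsMinExt Hs r (eta ξ) (lam (ZFSet.rank (γ ξ) + 1)) (M ξ) (M (ξ + 1)))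
    (hlim : ∀ ξ, ξ ≤ ζ → Order.IsSuccLimit ξ → (M ξ).toSet = ⋃ η ∈ Set.Iio ξ, (M η).toSet) :
    ∀ ξ, ξ ≤ ζ → ∀ η, η ≤ ξ → NthOrdOf (M ξ) η (γ η) :=
  stmt_17_general Hs r lam hlamord hlaminc ζ M γ eta hγ heta hsucc hlim

end P746
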